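/- If T is a tree that is not a star and has at least 4 vertices, then T contains two vertices at distance exactly 3, and the set {u,v} of two such vertices is a geodetic hull set of the complementary prism T\bar{T}. -/

import Mathlib

open SimpleGraph

/-- The geodetic closed interval `I[u,v]`: `u`, `v`, and all vertices lying on
some shortest `u`–`v` path. -/
def geoInterval {V : Type*} (G : SimpleGraph V) (u v : V) : Set V :=
  {w | w = u ∨ w = v ∨ (G.Reachable u v ∧ G.dist u w + G.dist w v = G.dist u v)}

/-- A set is geodetically convex if it is closed under intervals. -/
def IsGeoConvex {V : Type*} (G : SimpleGraph V) (S : Set V) : Prop :=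
  ∀ u ∈ S, ∀ v ∈ S, geoInterval G u v ⊆ S

/-- The geodetic convex hull: the smallest convex set containing `S`. -/
def geoHull {V : Type*} (G : SimpleGraph V) (S : Set V) : Set V :=
  ⋂₀ {T | IsGeoConvex G T ∧ S ⊆ T}

/-- `S` is a hull set if its convex hull is the whole vertex set. -/
def IsHullSet {V : Type*} (G : SimpleGraph V) (S : Set V) : Prop :=
  geoHull G S = Set.univ

/-- The geodetic hull number: minimum cardinality of a hull set. -/
noncomputable def hullNumber {V : Type*} (G : SimpleGraph V) : ℕ :=
  sInf {n | ∃ S : Set V, S.ncard = n ∧ IsHullSet G S}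

/-- A vertex is simplicial if its closed neighborhood induces a clique. -/
def IsSimplicial {V : Type*} (G : SimpleGraph V) (v : V) : Prop :=
  ∀ a ∈ G.neighborSet v, ∀ b ∈ G.neighborSet v, a ≠ b → G.Adj a b

/-- The complementary prism `G G̅`: disjoint union of `G` (left copies) and its
complement (right copies), plus a perfect matching between corresponding vertices. -/
def compPrism {V : Type*} (G : SimpleGraph V) : SimpleGraph (V ⊕ V) where
  Adj x y :=
    match x, y with
    | .inl u, .inl w => G.Adj u w
    | .inr u, .inr w => u ≠ w ∧ ¬ G.Adj u w
    | .inl u, .inr w => u = w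
    | .inr u, .inl w => u = w
  symm := ⟨by
    rintro (u | u) (w | w) h
    · exact h.symm
    · exact h.symm
    · exact h.symm
    · exact ⟨h.1.symm, fun a => h.2 a.symm⟩⟩
  loopless := ⟨by
    rintro (u | u) h
    · exact G.irrefl h
    · exact h.1 rfl⟩

/-!
In a tree that is not a star, some vertex `x` has a vertex `w` at distance two through `m`, and `m`
has a vertex `z` at distance two through `n`. Either `x - m - n - z` or `w - m - x - z` is a path,
and paths in a tree are geodesics, so two vertices lie at distance three.

Given a geodesic `u - a - b - v` of `T`, both `inl u - inl a - inl b - inl v` and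
`inl u - inr u - inr v - inl v` are geodesics of the prism, and `inl a - inr a - inr v`,
`inl b - inr b - inr u` are geodesics too, so the hull contains both copies of the path. Acyclicity
makes every other vertex `w` non-adjacent to both ends `x`, `y` of some edge of the path, which puts
`inr w` on the geodesic `inr x - inr w - inr y`. Once the hull contains all of `inr`, each edge `xy`
of `T` puts `inl y` on the geodesic `inl x - inl y - inr y`, and connectivity finishes.
-/

namespace SimpleGraph

variable {V : Type*} {G : SimpleGraph V} {u v w x y z : V}

lemma Reachable.exists_dist_eq_of_le_dist (hr : G.Reachable u w) {k : ℕ}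
    (hk : k ≤ G.dist u w) : ∃ v, G.dist u v = k := by
  obtain ⟨p, hp⟩ := hr.exists_walk_length_eq_dist
  refine ⟨p.getVert k, ?_⟩
  rw [← length_eq_dist_of_subwalk hp (p.isSubwalk_take k), Walk.take_length]
  omega

lemma exists_adj_adj_of_dist_eq_two (h : G.dist u v = 2) : ∃ w, G.Adj u w ∧ G.Adj w v := by
  obtain ⟨p, hp⟩ := exists_walk_of_dist_ne_zero (h ▸ two_ne_zero)
  rw [h] at hp
  rcases p with _ | ⟨h₁, _ | ⟨h₂, _ | _⟩⟩ <;> simp at hp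
  exact ⟨_, h₁, h₂⟩

lemma exists_adj_adj_adj_of_dist_eq_three (h : G.dist u v = 3) :
    ∃ a b, G.Adj u a ∧ G.Adj a b ∧ G.Adj b v := by
  obtain ⟨p, hp⟩ := exists_walk_of_dist_ne_zero (h ▸ three_ne_zero)
  rw [h] at hp
  rcases p with _ | ⟨h₁, _ | ⟨h₂, _ | ⟨h₃, _ | _⟩⟩⟩ <;> simp at hp
  exact ⟨_, _, h₁, h₂, h₃⟩

lemma IsAcyclic.dist_eq_length_of_isPath (hG : G.IsAcyclic) {p : G.Walk u v} (hp : p.IsPath) :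
    G.dist u v = p.length := by
  obtain ⟨q, hq, hqd⟩ := p.reachable.exists_path_of_dist
  obtain rfl : p = q := congrArg Subtype.val ((hG.subsingleton_path u v).elim ⟨p, hp⟩ ⟨q, hq⟩)
  exact hqd.symm

lemma IsAcyclic.not_adj_of_adj_of_adj (hG : G.IsAcyclic) (hxy : G.Adj x y) (hyz : G.Adj y z) :
    ¬ G.Adj x z := fun hxz =>
  hG.dist_ne_of_adj hyz hxy.reachable <| by
    rw [dist_eq_one_iff_adj.2 hxy, dist_eq_one_iff_adj.2 hxz]

lemma IsAcyclic.eq_of_adj_of_adj (hG : G.IsAcyclic) (hxz : x ≠ z) (hxy : G.Adj x y)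
    (hyz : G.Adj y z) (hxw : G.Adj x w) (hwz : G.Adj w z) : y = w := by
  have hp : (Walk.cons hxy (Walk.cons hyz .nil)).IsPath := by simp [hxy.ne, hyz.ne, hxz]
  have hq : (Walk.cons hxw (Walk.cons hwz .nil)).IsPath := by simp [hxw.ne, hwz.ne, hxz]
  have := (hG.subsingleton_path x z).elim ⟨_, hp⟩ ⟨_, hq⟩
  simpa using congrArg (fun p : G.Path x z => p.1.getVert 1) this

lemma Connected.exists_dist_eq_three_or_exists_adj_adj (hconn : G.Connected)
    (hx : ∃ w, w ≠ x ∧ ¬ G.Adj x w) :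
    (∃ u v, G.dist u v = 3) ∨ ∃ m w, G.Adj x m ∧ G.Adj m w ∧ x ≠ w ∧ ¬ G.Adj x w := by
  obtain ⟨w, hwx, hnxw⟩ := hx
  have h1 : 1 < G.dist x w := (hconn x w).one_lt_dist_of_ne_of_not_adj hwx.symm hnxw
  obtain h2 | h3 : G.dist x w = 2 ∨ 3 ≤ G.dist x w := by omega
  · obtain ⟨m, hxm, hmw⟩ := exists_adj_adj_of_dist_eq_two h2
    exact .inr ⟨m, w, hxm, hmw, hwx.symm, hnxw⟩
  · exact .inl ⟨x, (hconn x w).exists_dist_eq_of_le_dist h3⟩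

lemma IsAcyclic.exists_dist_eq_three (hG : G.IsAcyclic) (hconn : G.Connected) [Nonempty V]
    (hstar : ¬ ∃ c, ∀ v, v ≠ c → G.Adj c v) : ∃ u v, G.dist u v = 3 := by
  push Not at hstar
  obtain ⟨x⟩ := ‹Nonempty V›
  obtain h | ⟨m, w, hxm, hmw, hxw, -⟩ := hconn.exists_dist_eq_three_or_exists_adj_adj (hstar x)
  · exact h
  obtain h | ⟨n, z, hmn, hnz, hmz, hnmz⟩ :=
    hconn.exists_dist_eq_three_or_exists_adj_adj (hstar m)
  · exact h
  by_cases hnx : n = x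
  · subst hnx
    have hwz : w ≠ z := by rintro rfl; exact hnmz hmw
    refine ⟨w, z, ?_⟩
    simpa using hG.dist_eq_length_of_isPath (p := .cons hmw.symm (.cons hmn hnz.toWalk))
      (by simp [hmw.ne', hmn.ne, hnz.ne, hxw.symm, hwz, hmz])
  · have hxz : x ≠ z := by rintro rfl; exact hnmz hxm.symm
    refine ⟨x, z, ?_⟩
    simpa using hG.dist_eq_length_of_isPath (p := .cons hxm (.cons hmn hnz.toWalk))
      (by simp [hxm.ne, hmn.ne, hnz.ne, Ne.symm hnx, hxz, hmz])

lemma IsAcyclic.not_adj_ends_of_path_three (hG : G.IsAcyclic) {a b : V} (hua : G.Adj u a)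
    (hab : G.Adj a b) (hbv : G.Adj b v) (hub : u ≠ b) (hav : a ≠ v) (hwa : w ≠ a) (hwb : w ≠ b) :
    (¬ G.Adj w u ∧ ¬ G.Adj w a) ∨ (¬ G.Adj w a ∧ ¬ G.Adj w b) ∨ (¬ G.Adj w b ∧ ¬ G.Adj w v) := by
  by_cases hwa' : G.Adj w a
  · exact .inr <| .inr ⟨hG.not_adj_of_adj_of_adj hwa' hab,
      fun hwv => hwb (hG.eq_of_adj_of_adj hav hab hbv hwa'.symm hwv).symm⟩
  by_cases hwu : G.Adj w u
  · exact .inr <| .inl ⟨hwa', fun hwb' => hwa (hG.eq_of_adj_of_adj hub hua hab hwu.symm hwb').symm⟩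
  · exact .inl ⟨hwu, hwa'⟩

end SimpleGraph

section GeodeticInterval

variable {V : Type*} {G : SimpleGraph V} {x y w : V}

lemma SimpleGraph.Walk.mem_geoInterval_of_mem_support {p : G.Walk x y}
    (hp : p.length = G.dist x y) (hw : w ∈ p.support) : w ∈ geoInterval G x y := by
  classical
  refine Or.inr (Or.inr ⟨p.reachable, ?_⟩)
  rw [← length_eq_dist_of_subwalk hp (p.isSubwalk_takeUntil hw),
    ← length_eq_dist_of_subwalk hp (p.isSubwalk_dropUntil hw), ← Walk.length_append,
    p.take_spec hw, hp]

lemma mem_geoInterval_of_adj_of_adj (hxw : G.Adj x w) (hwy : G.Adj w y) (hxy : x ≠ y)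
    (hnxy : ¬ G.Adj x y) : w ∈ geoInterval G x y := by
  let p := Walk.cons hxw (Walk.cons hwy .nil)
  have hlen : p.length = G.dist x y :=
    le_antisymm (p.reachable.one_lt_dist_of_ne_of_not_adj hxy hnxy) (dist_le p)
  exact Walk.mem_geoInterval_of_mem_support hlen (by simp [p])

end GeodeticInterval

section CompPrism

variable {V : Type*} {G : SimpleGraph V} {u v x y w : V}

@[simp] lemma compPrism_adj_inl_inl : (compPrism G).Adj (.inl u) (.inl v) ↔ G.Adj u v := Iff.rfl

@[simp] lemma compPrism_adj_inr_inr :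
    (compPrism G).Adj (.inr u) (.inr v) ↔ u ≠ v ∧ ¬ G.Adj u v := Iff.rfl

@[simp] lemma compPrism_adj_inl_inr : (compPrism G).Adj (.inl u) (.inr v) ↔ u = v := Iff.rfl

@[simp] lemma compPrism_adj_inr_inl : (compPrism G).Adj (.inr u) (.inl v) ↔ u = v := Iff.rfl

lemma compPrism_dist_inl_inl_of_dist_eq_three (h : G.dist u v = 3) :
    (compPrism G).dist (.inl u) (.inl v) = 3 := by
  have hT : 2 < G.edist u v := by
    rw [← (Reachable.of_dist_ne_zero (h ▸ three_ne_zero)).coe_dist_eq_edist, h]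
    norm_num
  obtain ⟨hne, hnadj, hcommon⟩ := two_lt_edist_iff.1 hT
  let p : (compPrism G).Walk (.inl u) (.inl v) :=
    .cons (compPrism_adj_inl_inr.2 rfl)
      (.cons (compPrism_adj_inr_inr.2 ⟨hne, hnadj⟩) (.cons (compPrism_adj_inr_inl.2 rfl) .nil))
  have hP : 2 < (compPrism G).edist (.inl u) (.inl v) := by
    refine two_lt_edist_iff.2 ⟨by simpa, by simpa, Set.eq_empty_iff_forall_notMem.2 ?_⟩
    rintro (w | w) ⟨huw, hwv⟩
    · exact (Set.eq_empty_iff_forall_notMem.1 hcommon w) ⟨huw, hwv⟩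
    · exact hne ((show u = w from huw).trans (show v = w from hwv).symm)
  rw [← p.reachable.coe_dist_eq_edist] at hP
  have := dist_le p
  simp only [Walk.length_cons, Walk.length_nil, p] at this
  norm_cast at hP
  omega

lemma inl_mem_geoInterval_inl_inr (h : G.Adj x y) :
    .inl y ∈ geoInterval (compPrism G) (.inl x) (.inr y) :=
  mem_geoInterval_of_adj_of_adj (compPrism_adj_inl_inl.2 h) rfl (by simp) (by simpa using h.ne)

lemma inr_mem_geoInterval_inl_inr (hxy : x ≠ y) (h : ¬ G.Adj x y) :
    .inr x ∈ geoInterval (compPrism G) (.inl x) (.inr y) :=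
  mem_geoInterval_of_adj_of_adj rfl ⟨hxy, h⟩ (by simp) (by simpa using hxy)

lemma inr_mem_geoInterval_inr_inr (h : G.Adj x y) (hxw : x ≠ w) (hwy : w ≠ y)
    (hnxw : ¬ G.Adj x w) (hnwy : ¬ G.Adj w y) :
    .inr w ∈ geoInterval (compPrism G) (.inr x) (.inr y) :=
  mem_geoInterval_of_adj_of_adj ⟨hxw, hnxw⟩ ⟨hwy, hnwy⟩ (by simpa using h.ne) (by simp [h])

end CompPrism

section CompPrismHull

variable {V : Type*} {G : SimpleGraph V} {C : Set (V ⊕ V)}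

lemma IsGeoConvex.inl_mem_of_forall_inr_mem (hC : IsGeoConvex (compPrism G) C)
    (hR : ∀ w, .inr w ∈ C) {x y : V} (hxy : G.Reachable x y) (hx : .inl x ∈ C) : .inl y ∈ C := by
  obtain ⟨p⟩ := hxy
  induction p with
  | nil => exact hx
  | cons h _ ih => exact ih (hC _ hx _ (hR _) (inl_mem_geoInterval_inl_inr h))

lemma IsGeoConvex.inr_mem_of_inr_mem_path (hC : IsGeoConvex (compPrism G) C) (hG : G.IsAcyclic)
    {u a b v : V} (hua : G.Adj u a) (hab : G.Adj a b) (hbv : G.Adj b v) (hub : u ≠ b) (hav : a ≠ v)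
    (hu : .inr u ∈ C) (ha : .inr a ∈ C) (hb : .inr b ∈ C) (hv : .inr v ∈ C) (w : V) :
    .inr w ∈ C := by
  have edge : ∀ {x y}, G.Adj x y → .inr x ∈ C → .inr y ∈ C → x ≠ w → w ≠ y → ¬ G.Adj w x →
      ¬ G.Adj w y → .inr w ∈ C := fun hxy hx hy hxw hwy hnwx hnwy =>
    hC _ hx _ hy (inr_mem_geoInterval_inr_inr hxy hxw hwy (fun h => hnwx h.symm) hnwy)
  by_cases hwu : w = u
  · exact hwu ▸ hu
  by_cases hwa : w = a
  · exact hwa ▸ ha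
  by_cases hwb : w = b
  · exact hwb ▸ hb
  by_cases hwv : w = v
  · exact hwv ▸ hv
  rcases hG.not_adj_ends_of_path_three hua hab hbv hub hav hwa hwb with h | h | h
  · exact edge hua hu ha (Ne.symm hwu) hwa h.1 h.2
  · exact edge hab ha hb (Ne.symm hwa) hwb h.1 h.2
  · exact edge hbv hb hv (Ne.symm hwb) hwv h.1 h.2

theorem isHullSet_compPrism_of_dist_eq_three (hconn : G.Connected) (hG : G.IsAcyclic) {u v : V}
    (h : G.dist u v = 3) :
    IsHullSet (compPrism G) {.inl u, .inl v} := by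
  obtain ⟨a, b, hua, hab, hbv⟩ := exists_adj_adj_adj_of_dist_eq_three h
  have short : ∀ p : G.Walk u v, 3 ≤ p.length := fun p => h ▸ dist_le p
  have huv : u ≠ v := by rintro rfl; simpa using short .nil
  have hnuv : ¬ G.Adj u v := fun h' => by simpa using short h'.toWalk
  have hub : u ≠ b := by rintro rfl; simpa using short hbv.toWalk
  have hav : a ≠ v := by rintro rfl; simpa using short hua.toWalk
  have hnub : ¬ G.Adj u b := fun h' => by simpa using short (.cons h' hbv.toWalk)
  have hnav : ¬ G.Adj a v := fun h' => by simpa using short (.cons hua h'.toWalk)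
  rw [IsHullSet, Set.eq_univ_iff_forall]
  refine fun x => Set.mem_sInter.2 fun C ⟨hC, hsub⟩ => ?_
  have hlu : .inl u ∈ C := hsub (by simp)
  have hlv : .inl v ∈ C := hsub (by simp)
  have geodesic : ∀ p : (compPrism G).Walk (.inl u) (.inl v), p.length = 3 →
      ∀ x ∈ p.support, x ∈ C := fun p hp x hx =>
    hC _ hlu _ hlv (Walk.mem_geoInterval_of_mem_support
      (hp.trans (compPrism_dist_inl_inl_of_dist_eq_three h).symm) hx)
  let pL : (compPrism G).Walk (.inl u) (.inl v) := .cons (compPrism_adj_inl_inl.2 hua)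
    (.cons (compPrism_adj_inl_inl.2 hab) (.cons (compPrism_adj_inl_inl.2 hbv) .nil))
  let pR : (compPrism G).Walk (.inl u) (.inl v) := .cons (compPrism_adj_inl_inr.2 rfl)
    (.cons (compPrism_adj_inr_inr.2 ⟨huv, hnuv⟩) (.cons (compPrism_adj_inr_inl.2 rfl) .nil))
  have hla : .inl a ∈ C := geodesic pL rfl _ (by simp [pL])
  have hlb : .inl b ∈ C := geodesic pL rfl _ (by simp [pL])
  have hru : .inr u ∈ C := geodesic pR rfl _ (by simp [pR])
  have hrv : .inr v ∈ C := geodesic pR rfl _ (by simp [pR])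
  have hra : .inr a ∈ C := hC _ hla _ hrv (inr_mem_geoInterval_inl_inr hav hnav)
  have hrb : .inr b ∈ C := hC _ hlb _ hru (inr_mem_geoInterval_inl_inr hub.symm (hnub ·.symm))
  have hR := hC.inr_mem_of_inr_mem_path hG hua hab hbv hub hav hru hra hrb hrv
  rcases x with w | w
  · exact hC.inl_mem_of_forall_inr_mem hR (hconn u w) hlu
  · exact hR w

end CompPrismHull

theorem tree_not_star_dist_three_hullSet {V : Type*} [Fintype V] (T : SimpleGraph V)
    (hconn : T.Connected) (hac : T.IsAcyclic) (hcard : 4 ≤ Fintype.card V)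
    (hstar : ¬ ∃ c : V, ∀ v : V, v ≠ c → T.Adj c v) :
    (∃ u v : V, T.dist u v = 3) ∧
    ∀ u v : V, T.dist u v = 3 →
      IsHullSet (compPrism T) {Sum.inl u, Sum.inl v} := by
  have : Nonempty V := Fintype.card_pos_iff.mp (by omega)
  exact ⟨hac.exists_dist_eq_three hconn hstar,
    fun _ _ h => isHullSet_compPrism_of_dist_eq_three hconn hac h⟩
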